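/- arXiv:1906.10967 — 2 statements merged into one kernel-verified Lean document; each statement's English description precedes it below -/
import Mathlib

section
/- Let Γ be a symmetric positive definite p×p matrix, Υ a p×r full-rank matrix, and C := (I_p − Γ^{1/2} Υ (Υ' Γ Υ)^{-1} Υ' Γ^{1/2}) Γ^{-1/2}. Then Γ C' C Γ C' C Γ = Γ C' C Γ, i.e., the condition Σ C' C Σ C' C Σ = Σ C' C Σ of Assumption B(iii) holds with Σ = Γ. -/
/-!
Write `R = Γ^{1/2}` and `B = R Υ`. The hat matrix `P = B (Bᵀ B)⁻¹ Bᵀ` is a symmetric idempotent,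
so `C = (1 - P) R⁻¹` gives `Γ Cᵀ C = R (1 - P) R⁻¹`, a conjugate of the idempotent `1 - P`.
Hence `Γ Cᵀ C` is idempotent, and `Γ Cᵀ C Γ Cᵀ C Γ = (Γ Cᵀ C)² Γ = Γ Cᵀ C Γ`.
-/

open Matrix

section OldSqrt

open scoped ComplexOrder

noncomputable def Matrix.PosSemidef.sqrt {n 𝕜 : Type*} [Fintype n] [DecidableEq n] [RCLike 𝕜]
    {A : Matrix n n 𝕜} (hA : A.PosSemidef) : Matrix n n 𝕜 :=
  (hA.1.eigenvectorUnitary : Matrix n n 𝕜) * diagonal (((↑) : ℝ → 𝕜) ∘ (√·) ∘ hA.1.eigenvalues) *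
    (star hA.1.eigenvectorUnitary : Matrix n n 𝕜)

end OldSqrt

theorem IsIdempotentElem.mul_mul_of_mul_eq_one {M : Type*} [Monoid M] {e a b : M}
    (he : IsIdempotentElem e) (hba : b * a = 1) : IsIdempotentElem (a * e * b) := by
  calc a * e * b * (a * e * b) = a * e * (b * a) * e * b := by simp only [mul_assoc]
    _ = a * e * b := by rw [hba, mul_one, mul_assoc a e e, he.eq]

namespace Matrix

section Sqrt

open scoped ComplexOrder

variable {n 𝕜 : Type*} [Fintype n] [DecidableEq n] [RCLike 𝕜]

theorem PosSemidef.sqrt_mul_self {A : Matrix n n 𝕜} (hA : A.PosSemidef) :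
    hA.sqrt * hA.sqrt = A := by
  have hU : (star hA.1.eigenvectorUnitary : Matrix n n 𝕜) * hA.1.eigenvectorUnitary = 1 :=
    Unitary.star_mul_self_of_mem (SetLike.coe_mem _)
  have hD : diagonal (((↑) : ℝ → 𝕜) ∘ (√·) ∘ hA.1.eigenvalues) *
      diagonal (((↑) : ℝ → 𝕜) ∘ (√·) ∘ hA.1.eigenvalues) =
        diagonal (((↑) : ℝ → 𝕜) ∘ hA.1.eigenvalues) := by
    rw [diagonal_mul_diagonal]
    congr 1
    funext i
    simp [← RCLike.ofReal_mul, Real.mul_self_sqrt (hA.eigenvalues_nonneg i)]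
  conv_rhs => rw [hA.1.spectral_theorem, Unitary.conjStarAlgAut_apply]
  simp only [PosSemidef.sqrt, Matrix.mul_assoc]
  rw [← Matrix.mul_assoc (star _ : Matrix n n 𝕜) _ _, hU, Matrix.one_mul,
    ← Matrix.mul_assoc _ _ (star _), hD]

theorem PosSemidef.conjTranspose_sqrt {A : Matrix n n 𝕜} (hA : A.PosSemidef) :
    hA.sqrtᴴ = hA.sqrt := by
  rw [PosSemidef.sqrt, conjTranspose_mul, conjTranspose_mul, diagonal_conjTranspose,
    ← star_eq_conjTranspose, ← star_eq_conjTranspose, star_star, Matrix.mul_assoc]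
  congr 3
  funext i
  simp

theorem PosDef.isUnit_det_sqrt {A : Matrix n n 𝕜} (hA : A.PosDef) :
    IsUnit hA.posSemidef.sqrt.det := by
  have h : IsUnit (hA.posSemidef.sqrt * hA.posSemidef.sqrt) := by
    rw [hA.posSemidef.sqrt_mul_self]
    exact hA.isUnit
  exact (isUnit_iff_isUnit_det _).mp (isUnit_of_mul_isUnit_left h)

end Sqrt

section HatMatrix

variable {m n α : Type*} [Fintype m] [Fintype n] [DecidableEq m] [CommRing α]

theorem nonsing_inv_mul_mul_nonsing_inv (A : Matrix m m α) : A⁻¹ * A * A⁻¹ = A⁻¹ := by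
  by_cases hA : IsUnit A.det
  · rw [nonsing_inv_mul A hA, Matrix.one_mul]
  · rw [nonsing_inv_apply_not_isUnit A hA, Matrix.zero_mul, Matrix.zero_mul]

/-- The orthogonal projection onto the column space of `B` when `Bᵀ * B` is invertible;
otherwise `(Bᵀ * B)⁻¹ = 0` and this is `0`. -/
noncomputable def hatMatrix (B : Matrix n m α) : Matrix n n α := B * (Bᵀ * B)⁻¹ * Bᵀ

theorem isIdempotentElem_hatMatrix (B : Matrix n m α) : IsIdempotentElem (hatMatrix B) := by
  calc B * (Bᵀ * B)⁻¹ * Bᵀ * (B * (Bᵀ * B)⁻¹ * Bᵀ)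
      = B * ((Bᵀ * B)⁻¹ * (Bᵀ * B) * (Bᵀ * B)⁻¹) * Bᵀ := by simp only [Matrix.mul_assoc]
    _ = B * (Bᵀ * B)⁻¹ * Bᵀ := by rw [nonsing_inv_mul_mul_nonsing_inv]

theorem transpose_hatMatrix (B : Matrix n m α) : (hatMatrix B)ᵀ = hatMatrix B := by
  rw [hatMatrix, transpose_mul, transpose_mul, transpose_nonsing_inv, transpose_mul,
    transpose_transpose, Matrix.mul_assoc]

end HatMatrix

theorem _root_.IsIdempotentElem.mul_self_mul_transpose_mul {n α : Type*} [Fintype n]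
    [DecidableEq n] [CommRing α] {Q R : Matrix n n α} (hQ : IsIdempotentElem Q) (hQT : Qᵀ = Q)
    (hRT : Rᵀ = R) (hR : IsUnit R.det) :
    IsIdempotentElem (R * R * (Q * R⁻¹)ᵀ * (Q * R⁻¹)) := by
  have hconj : R * R * (Q * R⁻¹)ᵀ * (Q * R⁻¹) = R * Q * R⁻¹ := by
    rw [transpose_mul, transpose_nonsing_inv, hRT, hQT]
    calc R * R * (R⁻¹ * Q) * (Q * R⁻¹) = R * (R * R⁻¹) * (Q * Q) * R⁻¹ := by
          simp only [Matrix.mul_assoc]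
      _ = R * Q * R⁻¹ := by rw [mul_nonsing_inv R hR, Matrix.mul_one, hQ.eq]
  rw [hconj]
  exact hQ.mul_mul_of_mul_eq_one (nonsing_inv_mul R hR)

end Matrix

theorem stmt3_general (p r : ℕ)
    (Γ : Matrix (Fin p) (Fin p) ℝ) (hΓ : Γ.PosDef)
    (Υ : Matrix (Fin p) (Fin r) ℝ) :
    let R := hΓ.posSemidef.sqrt
    let C := ((1 : Matrix (Fin p) (Fin p) ℝ) - R * Υ * (Υᵀ * Γ * Υ)⁻¹ * Υᵀ * R) * R⁻¹
    Γ * Cᵀ * C * Γ * Cᵀ * C * Γ = Γ * Cᵀ * C * Γ := by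
  intro R C
  have hRR : R * R = Γ := hΓ.posSemidef.sqrt_mul_self
  have hRT : Rᵀ = R := by
    rw [← conjTranspose_eq_transpose_of_trivial]
    exact hΓ.posSemidef.conjTranspose_sqrt
  have hC : C = (1 - hatMatrix (R * Υ)) * R⁻¹ := by
    simp only [C, hatMatrix, transpose_mul, hRT, ← hRR, Matrix.mul_assoc]
  have hQT : (1 - hatMatrix (R * Υ))ᵀ = 1 - hatMatrix (R * Υ) := by
    rw [transpose_sub, transpose_one, transpose_hatMatrix]
  have hidem : IsIdempotentElem (Γ * Cᵀ * C) := by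
    rw [hC, ← hRR]
    exact (isIdempotentElem_hatMatrix _).one_sub.mul_self_mul_transpose_mul hQT hRT
      hΓ.isUnit_det_sqrt
  calc Γ * Cᵀ * C * Γ * Cᵀ * C * Γ = Γ * Cᵀ * C * (Γ * Cᵀ * C) * Γ := by
        simp only [Matrix.mul_assoc]
    _ = Γ * Cᵀ * C * Γ := by rw [hidem.eq]

theorem stmt3 (p r : ℕ)
    (Γ : Matrix (Fin p) (Fin p) ℝ) (hΓ : Γ.PosDef)
    (Υ : Matrix (Fin p) (Fin r) ℝ) (hΥ : Υ.rank = r) :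
    let R := hΓ.posSemidef.sqrt
    let C := ((1 : Matrix (Fin p) (Fin p) ℝ) - R * Υ * (Υᵀ * Γ * Υ)⁻¹ * Υᵀ * R) * R⁻¹
    Γ * Cᵀ * C * Γ * Cᵀ * C * Γ = Γ * Cᵀ * C * Γ :=
  stmt3_general p r Γ hΓ Υ
end

section
/- Let Σ be a p×p symmetric positive semidefinite matrix and C a p×p matrix. Define L := Σ C' (C Σ C')⁻ C Σ, where A⁻ denotes the Moore–Penrose inverse of A. Then L is symmetric, and Σ − L is positive semidefinite. -/
/-!
Write `S = Bᴴ B` and `G = C Bᴴ`, so that `C S Cᴴ = G Gᴴ` and `L = Bᴴ Q B` with `Q = Gᴴ M G`.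
For any generalized inverse `M` of `G Gᴴ`, the matrix `Q` is the orthogonal projection onto the
row space of `G`: it fixes the columns of `Gᴴ`, because `G Gᴴ Y = 0` forces `Gᴴ Y = 0`.
Hence `L` is Hermitian and `S - L = Bᴴ (1 - Q) B` is positive semidefinite.
-/

open Matrix

namespace Matrix

variable {m n : Type*} [Fintype m] [Fintype n]

section StarOrderedRing

variable {R : Type*} [Ring R] [PartialOrder R] [StarRing R] [StarOrderedRing R] [NoZeroDivisors R]

theorem conjTranspose_mul_mul_mul_conjTranspose_of_mul_mul_eq {G : Matrix m n R}
    {M : Matrix m m R} (hM : G * Gᴴ * M * (G * Gᴴ) = G * Gᴴ) :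
    Gᴴ * M * G * Gᴴ = Gᴴ := by
  classical
  have h : G * Gᴴ * (M * (G * Gᴴ) - 1) = 0 := by
    rw [Matrix.mul_sub, ← Matrix.mul_assoc, hM, Matrix.mul_one, sub_self]
  rw [self_mul_conjTranspose_mul_eq_zero, Matrix.mul_sub, Matrix.mul_one, sub_eq_zero] at h
  simpa only [Matrix.mul_assoc] using h

theorem isStarProjection_conjTranspose_mul_mul {G : Matrix m n R} {M : Matrix m m R}
    (hM : G * Gᴴ * M * (G * Gᴴ) = G * Gᴴ) :
    IsStarProjection (Gᴴ * M * G) := by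
  have hMG := conjTranspose_mul_mul_mul_conjTranspose_of_mul_mul_eq hM
  have hMstar : Gᴴ * Mᴴ * G * Gᴴ = Gᴴ := by
    refine conjTranspose_mul_mul_mul_conjTranspose_of_mul_mul_eq ?_
    simpa only [conjTranspose_mul, conjTranspose_conjTranspose, Matrix.mul_assoc] using
      congrArg conjTranspose hM
  have hGMG : G * Gᴴ * M * G = G := by
    simpa only [conjTranspose_mul, conjTranspose_conjTranspose, Matrix.mul_assoc] using
      congrArg conjTranspose hMstar
  have hidem : Gᴴ * M * G * (Gᴴ * M * G) = Gᴴ * M * G := by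
    calc Gᴴ * M * G * (Gᴴ * M * G) = Gᴴ * M * G * Gᴴ * M * G := by
          simp only [Matrix.mul_assoc]
      _ = Gᴴ * M * G := by rw [hMG]
  have hstar : (Gᴴ * M * G)ᴴ * (Gᴴ * M * G) = (Gᴴ * M * G)ᴴ := by
    calc (Gᴴ * M * G)ᴴ * (Gᴴ * M * G) = Gᴴ * Mᴴ * (G * Gᴴ * M * G) := by
          simp only [conjTranspose_mul, conjTranspose_conjTranspose, Matrix.mul_assoc]
      _ = (Gᴴ * M * G)ᴴ := by
          rw [hGMG]
          simp only [conjTranspose_mul, conjTranspose_conjTranspose, Matrix.mul_assoc]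
  have hself : (Gᴴ * M * G)ᴴ * (Gᴴ * M * G) = Gᴴ * M * G := by
    simpa only [conjTranspose_mul, conjTranspose_conjTranspose] using congrArg conjTranspose hstar
  refine ⟨hidem, ?_⟩
  rw [IsSelfAdjoint, star_eq_conjTranspose, ← hstar, hself]

end StarOrderedRing

open scoped ComplexOrder MatrixOrder in
theorem PosSemidef.isHermitian_and_posSemidef_sub_of_mul_mul_eq {𝕜 : Type*} [RCLike 𝕜]
    {S : Matrix n n 𝕜} {C : Matrix m n 𝕜} {M : Matrix m m 𝕜} (hS : S.PosSemidef)
    (hM : C * S * Cᴴ * M * (C * S * Cᴴ) = C * S * Cᴴ) :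
    (S * Cᴴ * M * C * S).IsHermitian ∧ (S - S * Cᴴ * M * C * S).PosSemidef := by
  classical
  obtain ⟨B, rfl⟩ := CStarAlgebra.nonneg_iff_eq_star_mul_self.mp hS.nonneg
  rw [star_eq_conjTranspose] at hM ⊢
  have hGG : C * Bᴴ * (C * Bᴴ)ᴴ = C * (Bᴴ * B) * Cᴴ := by
    simp only [conjTranspose_mul, conjTranspose_conjTranspose, Matrix.mul_assoc]
  have hQ := isStarProjection_conjTranspose_mul_mul (G := C * Bᴴ) (M := M) (by rwa [hGG])
  have hL : Bᴴ * B * Cᴴ * M * C * (Bᴴ * B) = Bᴴ * ((C * Bᴴ)ᴴ * M * (C * Bᴴ)) * B := by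
    simp only [conjTranspose_mul, conjTranspose_conjTranspose, Matrix.mul_assoc]
  have hSL : Bᴴ * B - Bᴴ * B * Cᴴ * M * C * (Bᴴ * B) =
      Bᴴ * (1 - (C * Bᴴ)ᴴ * M * (C * Bᴴ)) * B := by
    rw [hL, Matrix.mul_sub, Matrix.sub_mul, Matrix.mul_one]
  rw [hSL, hL]
  exact ⟨isHermitian_conjTranspose_mul_mul B hQ.isSelfAdjoint,
    hQ.one_sub.nonneg.posSemidef.conjTranspose_mul_mul_same B⟩

end Matrix

theorem stmt18_general (p : ℕ) (S C M : Matrix (Fin p) (Fin p) ℝ)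
    (hS : S.PosSemidef)
    (hMP1 : (C * S * Cᵀ) * M * (C * S * Cᵀ) = C * S * Cᵀ) :
    let L := S * Cᵀ * M * C * S
    Lᵀ = L ∧ (S - L).PosSemidef := by
  rw [← conjTranspose_eq_transpose_of_trivial] at hMP1
  simpa only [IsHermitian, conjTranspose_eq_transpose_of_trivial] using
    hS.isHermitian_and_posSemidef_sub_of_mul_mul_eq hMP1

theorem stmt18 (p : ℕ) (S C M : Matrix (Fin p) (Fin p) ℝ)
    (hS : S.PosSemidef)
    (hMP1 : (C * S * Cᵀ) * M * (C * S * Cᵀ) = C * S * Cᵀ)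
    (hMP2 : M * (C * S * Cᵀ) * M = M)
    (hMP3 : ((C * S * Cᵀ) * M)ᵀ = (C * S * Cᵀ) * M)
    (hMP4 : (M * (C * S * Cᵀ))ᵀ = M * (C * S * Cᵀ)) :
    let L := S * Cᵀ * M * C * S
    Lᵀ = L ∧ (S - L).PosSemidef :=
  stmt18_general p S C M hS hMP1
end
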